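/- For a hyperbolic iterated function system consisting of finitely many contractions f₁,…,fₙ of a nonempty complete metric space X, the Hutchinson operator H(A) = f₁(A) ∪ ⋯ ∪ fₙ(A) is a contraction on the space of nonempty compact subsets of X with the Hausdorff metric, with Lipschitz constant the maximum of the contraction ratios of the fᵢ. -/

import Mathlib

open TopologicalSpace Metric Set

section

variable {α β : Type*} [PseudoEMetricSpace α] [PseudoEMetricSpace β] {K : NNReal}

theorem LipschitzWith.infEDist_image_le {g : α → β} (hg : LipschitzWith K g) (x : α)
    {t : Set α} (ht : t.Nonempty) : infEDist (g x) (g '' t) ≤ K * infEDist x t := by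
  have := ht.to_subtype
  calc infEDist (g x) (g '' t) ≤ ⨅ y : t, K * edist x y :=
        le_iInf fun y => (infEDist_le_edist_of_mem (mem_image_of_mem g y.2)).trans (hg x y)
    _ = K * infEDist x t := by rw [← ENNReal.mul_iInf (by simp), iInf_subtype'', infEDist]

theorem LipschitzWith.hausdorffEDist_image_le {g : α → β} (hg : LipschitzWith K g)
    {s t : Set α} (hs : s.Nonempty) (ht : t.Nonempty) :
    hausdorffEDist (g '' s) (g '' t) ≤ K * hausdorffEDist s t := by
  have image_close {s t : Set α} (ht : t.Nonempty) :
      ∀ y ∈ g '' s, infEDist y (g '' t) ≤ K * hausdorffEDist s t := by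
    rintro _ ⟨x, hx, rfl⟩
    calc infEDist (g x) (g '' t) ≤ K * infEDist x t := hg.infEDist_image_le x ht
      _ ≤ K * hausdorffEDist s t := by gcongr; exact infEDist_le_hausdorffEDist_of_mem hx
  refine hausdorffEDist_le_of_infEDist (image_close ht) ?_
  rw [hausdorffEDist_comm]
  exact image_close hs

theorem hausdorffEDist_iUnion_image_le {ι : Sort*} {f : ι → α → β}
    (hf : ∀ i, LipschitzWith K (f i)) {s t : Set α} (hs : s.Nonempty) (ht : t.Nonempty) :
    hausdorffEDist (⋃ i, f i '' s) (⋃ i, f i '' t) ≤ K * hausdorffEDist s t :=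
  hausdorffEDist_iUnion_le.trans <| iSup_le fun i => (hf i).hausdorffEDist_image_le hs ht

end

theorem stmt_12_general {X : Type*} [MetricSpace X]
    (n : ℕ) (f : Fin n → X → X) (c : Fin n → NNReal)
    (hf : ∀ i, LipschitzWith (c i) (f i))
    (H : NonemptyCompacts X → NonemptyCompacts X)
    (hH : ∀ A : NonemptyCompacts X, (H A : Set X) = ⋃ i, f i '' (A : Set X)) :
    LipschitzWith (Finset.univ.sup c) H := by
  have hf_sup : ∀ i, LipschitzWith (Finset.univ.sup c) (f i) := fun i =>
    (hf i).weaken (Finset.le_sup (Finset.mem_univ i))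
  intro A B
  change hausdorffEDist (H A : Set X) (H B) ≤ _ * hausdorffEDist (A : Set X) B
  rw [hH, hH]
  exact hausdorffEDist_iUnion_image_le hf_sup A.nonempty B.nonempty

/-- The Hutchinson operator of a hyperbolic IFS `f₁,…,fₙ` (each `fᵢ` a contraction
with ratio `cᵢ < 1`) is Lipschitz on the space of nonempty compact subsets with the
Hausdorff metric, with constant `max cᵢ`. -/
theorem stmt_12 {X : Type*} [MetricSpace X] [CompleteSpace X] [Nonempty X]
    (n : ℕ) (hn : 0 < n) (f : Fin n → X → X) (c : Fin n → NNReal)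
    (hc : ∀ i, c i < 1) (hf : ∀ i, LipschitzWith (c i) (f i))
    (H : NonemptyCompacts X → NonemptyCompacts X)
    (hH : ∀ A : NonemptyCompacts X, (H A : Set X) = ⋃ i, f i '' (A : Set X)) :
    LipschitzWith (Finset.univ.sup c) H :=
  stmt_12_general n f c hf H hH
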